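/- arXiv:2008.12940 — 3 statements merged into one kernel-verified Lean document; each statement's English description precedes it below -/
import Mathlib

section
/- Let ν, γ > 0 and define the family of functions w_j : ℝ≥0 → ℝ, j ≥ 0, by w_0(t) = (1 − e^{−2νt})/(2ν) and ẇ_j(t) = −2ν·w_j(t) + γ·w_{j−1}(t), w_j(0) = 0 for j ≥ 1. Then w_j(t) = (1/(2ν))·(γ/(2ν))^j·(1 − e^{−2νt}·Σ_{k=0}^{j} (2νt)^k/k!) for all j ≥ 0 and t ≥ 0. -/
/-! With `a = 2ν`, `T n x = ∑_{k<n} x^k/k!` and `F j = gramianBoundary a γ j`, the closed forms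
satisfy the same recursion as `w j`: since `(e^{-x} T (n+1) x)' = -e^{-x} x^n/n!`, both `F' (j+1)` and
`-a F (j+1) + γ F j` equal `(γ/a)^(j+1) e^{-at} (at)^(j+1)/(j+1)!`. By induction on `j`, the difference
`w (j+1) - F (j+1)` then solves `d' = -a d` with `d 0 = 0`, so `e^{at} d` is constant and `d = 0`. -/

open Finset Real Nat

theorem eq_mul_exp_of_hasDerivAt_mul_self {f : ℝ → ℝ} {a : ℝ}
    (hf : ∀ t, HasDerivAt f (a * f t) t) (t : ℝ) : f t = f 0 * exp (a * t) := by
  have hg : ∀ s, HasDerivAt (fun s => exp (-(a * s)) * f s) 0 s := fun s => by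
    refine ((((hasDerivAt_id s).const_mul a).neg.exp).mul (hf s)).congr_deriv ?_
    simp only [id, mul_one]
    ring
  have hconst := is_const_of_deriv_eq_zero (fun s => (hg s).differentiableAt)
    (fun s => (hg s).deriv) t 0
  simp only [mul_zero, neg_zero, exp_zero, one_mul] at hconst
  rw [← hconst, mul_right_comm, ← exp_add, neg_add_cancel, exp_zero, one_mul]

noncomputable def expTaylor (n : ℕ) (x : ℝ) : ℝ := ∑ k ∈ range n, x ^ k / k !

theorem expTaylor_succ (n : ℕ) (x : ℝ) : expTaylor (n + 1) x = expTaylor n x + x ^ n / n ! :=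
  sum_range_succ _ _

theorem hasDerivAt_expTaylor_succ (n : ℕ) (x : ℝ) :
    HasDerivAt (expTaylor (n + 1)) (expTaylor n x) x := by
  induction n with
  | zero =>
    have : expTaylor 1 = fun _ => 1 := funext fun x => by simp [expTaylor]
    simpa [this, expTaylor] using hasDerivAt_const x (1 : ℝ)
  | succ n ih =>
    have hterm : HasDerivAt (fun x : ℝ => x ^ (n + 1) / (n + 1)!) (x ^ n / n !) x := by
      refine ((hasDerivAt_pow (n + 1) x).div_const ((n + 1)! : ℝ)).congr_deriv ?_
      rw [factorial_succ]
      push_cast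
      field_simp
    rw [show expTaylor (n + 2) = fun x => expTaylor (n + 1) x + x ^ (n + 1) / (n + 1)! from
      funext (expTaylor_succ _), expTaylor_succ]
    exact ih.add hterm

theorem hasDerivAt_exp_neg_mul_expTaylor (n : ℕ) (x : ℝ) :
    HasDerivAt (fun x => exp (-x) * expTaylor (n + 1) x) (-(exp (-x) * (x ^ n / n !))) x := by
  refine (((hasDerivAt_neg x).exp).mul (hasDerivAt_expTaylor_succ n x)).congr_deriv ?_
  rw [expTaylor_succ]
  ring

noncomputable def gramianBoundary (a γ : ℝ) (j : ℕ) (t : ℝ) : ℝ :=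
  1 / a * (γ / a) ^ j * (1 - exp (-(a * t)) * expTaylor (j + 1) (a * t))

theorem gramianBoundary_zero (a γ t : ℝ) :
    gramianBoundary a γ 0 t = (1 - exp (-(a * t))) / a := by
  simp [gramianBoundary, expTaylor]
  ring

theorem gramianBoundary_succ_zero (a γ : ℝ) (j : ℕ) : gramianBoundary a γ (j + 1) 0 = 0 := by
  simp [gramianBoundary, expTaylor, sum_range_succ']

theorem hasDerivAt_gramianBoundary_succ {a : ℝ} (ha : a ≠ 0) (γ : ℝ) (j : ℕ) (t : ℝ) :
    HasDerivAt (gramianBoundary a γ (j + 1))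
      (-a * gramianBoundary a γ (j + 1) t + γ * gramianBoundary a γ j t) t := by
  have h := (((hasDerivAt_exp_neg_mul_expTaylor (j + 1) (a * t)).comp t
    ((hasDerivAt_id t).const_mul a)).const_sub 1).const_mul (1 / a * (γ / a) ^ (j + 1))
  refine h.congr_deriv ?_
  simp only [gramianBoundary, expTaylor_succ (j + 1), pow_succ]
  field_simp
  ring

theorem gramian_boundary_elements_general (ν γ : ℝ) (hν : 0 < ν)
    (w : ℕ → ℝ → ℝ)
    (h0 : ∀ t : ℝ, w 0 t = (1 - Real.exp (-2 * ν * t)) / (2 * ν))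
    (hderiv : ∀ j : ℕ, 1 ≤ j → ∀ t : ℝ,
      HasDerivAt (w j) (-2 * ν * w j t + γ * w (j - 1) t) t)
    (hinit : ∀ j : ℕ, 1 ≤ j → w j 0 = 0) :
    ∀ (j : ℕ) (t : ℝ), 0 ≤ t →
      w j t = (1 / (2 * ν)) * (γ / (2 * ν)) ^ j *
        (1 - Real.exp (-2 * ν * t) *
          ∑ k ∈ Finset.range (j + 1), (2 * ν * t) ^ k / (Nat.factorial k : ℝ)) := by
  have hν₂ : 2 * ν ≠ 0 := by positivity
  have hw : ∀ j, w j = gramianBoundary (2 * ν) γ j := by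
    intro j
    induction j with
    | zero => funext t; rw [h0, gramianBoundary_zero, neg_mul, neg_mul]
    | succ j ih =>
      funext t
      have hdiff : ∀ s, HasDerivAt (fun s => w (j + 1) s - gramianBoundary (2 * ν) γ (j + 1) s)
          (-(2 * ν) * (w (j + 1) s - gramianBoundary (2 * ν) γ (j + 1) s)) s := fun s => by
        refine ((hderiv (j + 1) j.succ_pos s).sub
          (hasDerivAt_gramianBoundary_succ hν₂ γ j s)).congr_deriv ?_
        rw [Nat.add_sub_cancel, ih]
        ring
      have h := eq_mul_exp_of_hasDerivAt_mul_self hdiff t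
      rwa [hinit _ j.succ_pos, gramianBoundary_succ_zero, sub_self, zero_mul, sub_eq_zero] at h
  intro j t _
  simp only [hw, gramianBoundary, expTaylor, neg_mul]

theorem gramian_boundary_elements (ν γ : ℝ) (hν : 0 < ν) (hγ : 0 < γ)
    (w : ℕ → ℝ → ℝ)
    (h0 : ∀ t : ℝ, w 0 t = (1 - Real.exp (-2 * ν * t)) / (2 * ν))
    (hderiv : ∀ j : ℕ, 1 ≤ j → ∀ t : ℝ,
      HasDerivAt (w j) (-2 * ν * w j t + γ * w (j - 1) t) t)
    (hinit : ∀ j : ℕ, 1 ≤ j → w j 0 = 0) :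
    ∀ (j : ℕ) (t : ℝ), 0 ≤ t →
      w j t = (1 / (2 * ν)) * (γ / (2 * ν)) ^ j *
        (1 - Real.exp (-2 * ν * t) *
          ∑ k ∈ Finset.range (j + 1), (2 * ν * t) ^ k / (Nat.factorial k : ℝ)) :=
  gramian_boundary_elements_general ν γ hν w h0 hderiv hinit
end

section
/- Let ν, γ > 0 and d ≥ 1, b ≥ 1 be integers. Define W_{j,k}(t) for 0 ≤ j,k ≤ d as the solution of the matrix differential Lyapunov equation Ẇ = AW + WAᵀ + e₀e₀ᵀ with W(0) = 0, where A is the (d+1)×(d+1) matrix of the weighted directed path with A_{j,j} = −ν for all j, A_{j,j−1} = γ for 1 ≤ j ≤ d−1, and A_{d,d−1} = bγ. Then W_{d,d}(t) = (b²/(2ν))·(γ/(2ν))^{2d}·C(2d,d)·(1 − e^{−2νt}·Σ_{k=0}^{2d} (2νt)^k/k!), where C(2d,d) is the central binomial coefficient. -/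
open Matrix Finset
open scoped Nat

/-!
The impulse response of the weighted path is `e^{At} e₀ = e^{-νt} (κ_i t^i)_i`, where `κ_i` is
the product of the first `i` subdiagonal weights divided by `i!`. Hence the Gramian should be
`W_{ij}(t) = κ_i κ_j ∫₀ᵗ s^{i+j} e^{-2νs} ds`. This matrix solves the Lyapunov equation, whose
right-hand side is affine and hence Lipschitz, so it is the only solution with `W 0 = 0`.
At the target node `κ_d = b γ^d / d!`, and `(2d)! / (d!)² = C(2d, d)`.
-/

section
attribute [local instance] Matrix.normedAddCommGroup Matrix.normedSpace

theorem lyapunov_solution_unique {ι : Type*} [Fintype ι] [DecidableEq ι] (A Q : Matrix ι ι ℝ)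
    {W V : ℝ → Matrix ι ι ℝ}
    (hW : ∀ i j t, HasDerivAt (fun τ => W τ i j) ((A * W t + W t * Aᵀ + Q) i j) t)
    (hV : ∀ i j t, HasDerivAt (fun τ => V τ i j) ((A * V t + V t * Aᵀ + Q) i j) t)
    (h0 : W 0 = V 0) : W = V := by
  let L : Matrix ι ι ℝ →L[ℝ] Matrix ι ι ℝ :=
    LinearMap.toContinuousLinearMap (LinearMap.mulLeft ℝ A + LinearMap.mulRight ℝ Aᵀ)
  have hsol : ∀ {U : ℝ → Matrix ι ι ℝ},
      (∀ i j t, HasDerivAt (fun τ => U τ i j) ((A * U t + U t * Aᵀ + Q) i j) t) →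
      ∀ t, HasDerivAt U (L (U t) + Q) t ∧ U t ∈ Set.univ := fun hU t =>
    ⟨hasDerivAt_pi.2 fun i => hasDerivAt_pi.2 fun j => hU i j t, trivial⟩
  exact ODE_solution_unique_univ (v := fun _ X => L X + Q) (s := fun _ => Set.univ)
    (fun _ => (L.lipschitz.add (LipschitzWith.const Q)).lipschitzOnWith) (hsol hW) (hsol hV) h0

end

/-- For `c ≠ 0` this is `∫₀ᵗ s^m e^{-cs} ds`, in closed form. -/
noncomputable def expMoment (c : ℝ) (m : ℕ) (t : ℝ) : ℝ :=
  m ! / c ^ (m + 1) * (1 - Real.exp (-c * t) * ∑ k ∈ range (m + 1), (c * t) ^ k / k !)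

section expMoment
variable (c : ℝ)

lemma expMoment_zero_right (m : ℕ) : expMoment c m 0 = 0 := by
  simp [expMoment, sum_range_succ']

lemma hasDerivAt_exp_neg_mul_mul_sum (m : ℕ) (t : ℝ) :
    HasDerivAt (fun τ => Real.exp (-c * τ) * ∑ k ∈ range (m + 1), (c * τ) ^ k / k !)
      (-c * Real.exp (-c * t) * ((c * t) ^ m / m !)) t := by
  have hexp : HasDerivAt (fun τ => Real.exp (-c * τ)) (Real.exp (-c * t) * (-c * 1)) t :=
    ((hasDerivAt_id' t).const_mul (-c)).exp
  induction m with
  | zero =>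
    simp only [zero_add, sum_range_one, pow_zero, Nat.factorial_zero, Nat.cast_one,
      div_one, mul_one]
    exact hexp.congr_deriv (by ring)
  | succ m ih =>
    have hterm : HasDerivAt (fun τ => (c * τ) ^ (m + 1) / (m + 1 : ℕ) !)
        (c * ((c * t) ^ m / m !)) t :=
      ((((hasDerivAt_id' t).const_mul c).pow (m + 1)).div_const _).congr_deriv (by
        push_cast [Nat.factorial_succ]
        field_simp)
    simp_rw [sum_range_succ _ (m + 1), mul_add]
    refine (ih.add (hexp.mul hterm)).congr_deriv ?_
    push_cast [Nat.factorial_succ]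
    field_simp
    ring

variable {c}

lemma hasDerivAt_expMoment (hc : c ≠ 0) (m : ℕ) (t : ℝ) :
    HasDerivAt (expMoment c m) (t ^ m * Real.exp (-c * t)) t := by
  refine (((hasDerivAt_exp_neg_mul_mul_sum c m t).const_sub 1).const_mul
    ((m ! : ℝ) / c ^ (m + 1))).congr_deriv ?_
  field_simp
  ring

lemma natCast_mul_expMoment_pred_sub (hc : c ≠ 0) (n : ℕ) (t : ℝ) :
    n * expMoment c (n - 1) t - c * expMoment c n t =
      t ^ n * Real.exp (-c * t) - if n = 0 then 1 else 0 := by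
  cases n with
  | zero =>
    simp only [expMoment, Nat.cast_zero, zero_mul, zero_sub, zero_add, range_one, sum_singleton,
      pow_zero, Nat.factorial_zero, Nat.cast_one, div_one, mul_one, pow_one, if_pos]
    field_simp
    ring
  | succ m =>
    simp only [expMoment, Nat.add_sub_cancel, sum_range_succ _ (m + 1)]
    push_cast [Nat.factorial_succ]
    field_simp
    ring

end expMoment

noncomputable def pathGramian (ν : ℝ) (κ : ℕ → ℝ) (n : ℕ) (t : ℝ) :
    Matrix (Fin n) (Fin n) ℝ :=
  of fun i j => κ i * κ j * expMoment (2 * ν) (i + j) t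

lemma pathGramian_zero (ν : ℝ) (κ : ℕ → ℝ) (n : ℕ) : pathGramian ν κ n 0 = 0 := by
  ext i j
  simp [pathGramian, expMoment_zero_right]

lemma pathGramian_transpose (ν : ℝ) (κ : ℕ → ℝ) (n : ℕ) (t : ℝ) :
    (pathGramian ν κ n t)ᵀ = pathGramian ν κ n t := by
  ext i j
  simp only [transpose_apply, pathGramian, of_apply, add_comm (j : ℕ), mul_comm (κ j)]

section
variable {n : ℕ} {ν : ℝ} {A : Matrix (Fin (n + 1)) (Fin (n + 1)) ℝ} {κ : ℕ → ℝ}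

lemma sum_mul_of_lowerBidiagonal (hdiag : ∀ j, A j j = -ν)
    (hsub : ∀ j k : Fin (n + 1), (j : ℕ) = k + 1 → A j k * κ k = j * κ j)
    (hzero : ∀ j k : Fin (n + 1), j ≠ k → (j : ℕ) ≠ (k : ℕ) + 1 → A j k = 0)
    (f : ℕ → ℝ) (i : Fin (n + 1)) :
    ∑ l, A i l * (κ l * f l) = κ i * (i * f (i - 1) - ν * f i) := by
  induction i using Fin.cases with
  | zero =>
    rw [Fintype.sum_eq_single 0 fun l hl => by rw [hzero 0 l hl.symm (by simp), zero_mul], hdiag]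
    simp only [Fin.val_zero, Nat.cast_zero]
    ring
  | succ k =>
    have hpred : (k.succ : ℕ) = k.castSucc + 1 := by simp
    rw [Fintype.sum_eq_add k.succ k.castSucc Fin.castSucc_lt_succ.ne', hdiag,
      ← mul_assoc (A _ _), hsub _ _ hpred]
    · simp only [Fin.val_succ, Fin.val_castSucc, Nat.add_sub_cancel]
      ring
    · rintro l ⟨hl, hl'⟩
      rw [hzero _ l (Ne.symm hl) (fun h => hl' (Fin.ext (by simp at h ⊢; omega))), zero_mul]

lemma hasDerivAt_pathGramian_apply (hν : ν ≠ 0) (hdiag : ∀ j, A j j = -ν)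
    (hsub : ∀ j k : Fin (n + 1), (j : ℕ) = k + 1 → A j k * κ k = j * κ j)
    (hzero : ∀ j k : Fin (n + 1), j ≠ k → (j : ℕ) ≠ (k : ℕ) + 1 → A j k = 0)
    (hκ : κ 0 = 1) (i j : Fin (n + 1)) (t : ℝ) :
    HasDerivAt (fun τ => pathGramian ν κ (n + 1) τ i j)
      ((A * pathGramian ν κ (n + 1) t + pathGramian ν κ (n + 1) t * Aᵀ +
        Matrix.single 0 0 (1 : ℝ) : Matrix (Fin (n + 1)) (Fin (n + 1)) ℝ) i j) t := by
  set F := fun m => expMoment (2 * ν) m t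
  have hc : 2 * ν ≠ 0 := mul_ne_zero two_ne_zero hν
  have hpred : ∀ a b : ℕ, (a : ℝ) * F (a - 1 + b) = a * F (a + b - 1) := by
    rintro (_ | a) b
    · simp
    · rw [Nat.add_sub_cancel, Nat.add_right_comm, Nat.add_sub_cancel]
  have hrow : ∀ a b, (A * pathGramian ν κ (n + 1) t) a b =
      κ a * κ b * (a * F (a + b - 1) - ν * F (a + b)) := by
    intro a b
    simp only [mul_apply, pathGramian, of_apply, mul_assoc]
    rw [sum_mul_of_lowerBidiagonal hdiag hsub hzero (fun l => κ b * F (l + b)), ← hpred]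
    ring
  have hcol : (pathGramian ν κ (n + 1) t * Aᵀ) i j =
      κ i * κ j * (j * F (i + j - 1) - ν * F (i + j)) := by
    rw [← pathGramian_transpose, ← transpose_mul, transpose_apply, hrow, add_comm (j : ℕ)]
    ring
  have hsingle : (Matrix.single 0 0 1 : Matrix (Fin (n + 1)) (Fin (n + 1)) ℝ) i j =
      κ i * κ j * if (i + j : ℕ) = 0 then 1 else 0 := by
    by_cases h0 : i = 0 ∧ j = 0
    · obtain ⟨rfl, rfl⟩ := h0
      simp [hκ]
    · have hij : (i : ℕ) + j ≠ 0 := fun h =>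
        h0 ⟨Fin.ext (by rw [Fin.val_zero]; omega), Fin.ext (by rw [Fin.val_zero]; omega)⟩
      rw [if_neg hij, mul_zero]
      exact Matrix.single_apply_of_ne _ _ _ _ _ (by tauto)
  refine ((hasDerivAt_expMoment hc (i + j) t).const_mul (κ i * κ j)).congr_deriv ?_
  have hforce := natCast_mul_expMoment_pred_sub hc (i + j) t
  push_cast at hforce
  rw [Matrix.add_apply, Matrix.add_apply, hrow, hcol, hsingle]
  linear_combination (-(κ i * κ j)) * hforce

end

lemma mul_pow_div_factorial (x : ℝ) (k : ℕ) :
    x * (x ^ k / k !) = (k + 1 : ℕ) * (x ^ (k + 1) / (k + 1)!) := by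
  push_cast [Nat.factorial_succ]
  field_simp
  ring

theorem balloon_gramian_target_element_general (ν γ : ℝ) (hν : 0 < ν)
    (d b : ℕ) (hd : 1 ≤ d)
    (A : Matrix (Fin (d + 1)) (Fin (d + 1)) ℝ)
    (hAdiag : ∀ j, A j j = -ν)
    (hAsub : ∀ j : Fin (d + 1), ∀ k : Fin (d + 1), (j : ℕ) = (k : ℕ) + 1 → (j : ℕ) ≤ d - 1 → A j k = γ)
    (hAlast : ∀ j : Fin (d + 1), ∀ k : Fin (d + 1), (j : ℕ) = d → (k : ℕ) = d - 1 → A j k = b * γ)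
    (hAzero : ∀ j k : Fin (d + 1), j ≠ k → (j : ℕ) ≠ (k : ℕ) + 1 → A j k = 0)
    (W : ℝ → Matrix (Fin (d + 1)) (Fin (d + 1)) ℝ)
    (hW0 : W 0 = 0)
    (hWderiv : ∀ (i j : Fin (d + 1)) (t : ℝ),
      HasDerivAt (fun τ => W τ i j)
        (((A * W t + W t * Aᵀ + Matrix.single 0 0 (1 : ℝ) : Matrix (Fin (d + 1)) (Fin (d + 1)) ℝ)) i j) t) :
    ∀ t : ℝ, 0 ≤ t →
      W t (Fin.last d) (Fin.last d) =
        (b ^ 2 / (2 * ν)) * (γ / (2 * ν)) ^ (2 * d) * (Nat.choose (2 * d) d : ℝ) *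
          (1 - Real.exp (-2 * ν * t) *
            ∑ k ∈ Finset.range (2 * d + 1), (2 * ν * t) ^ k / (Nat.factorial k : ℝ)) := by
  intro t _
  set κ : ℕ → ℝ := fun m => (if m = d then (b : ℝ) else 1) * (γ ^ m / m !) with hκ
  have hκ0 : κ 0 = 1 := by simp [hκ, if_neg (show 0 ≠ d by omega)]
  have hsub : ∀ j k : Fin (d + 1), (j : ℕ) = k + 1 → A j k * κ k = j * κ j := by
    intro j k hjk
    have hkd : (k : ℕ) ≠ d := by omega
    simp only [hκ, hjk, if_neg hkd, one_mul]
    rcases j.is_le.eq_or_lt with hj | hj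
    · rw [hAlast j k hj (by omega), if_pos (by omega), mul_assoc, mul_pow_div_factorial]
      push_cast
      ring
    · rw [hAsub j k hjk (by omega), if_neg (by omega), one_mul, mul_pow_div_factorial]
  have hWeq : W = pathGramian ν κ (d + 1) :=
    lyapunov_solution_unique A _ hWderiv
      (hasDerivAt_pathGramian_apply hν.ne' hAdiag hsub hAzero hκ0) (by rw [hW0, pathGramian_zero])
  have hcentral : ((2 * d)! : ℝ) = (2 * d).choose d * d ! * d ! := by
    rw [two_mul, ← Nat.add_choose_mul_factorial_mul_factorial]
    push_cast
    ring
  rw [hWeq]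
  simp only [pathGramian, of_apply, Fin.val_last, κ, if_true, expMoment, ← two_mul, hcentral]
  rw [show -(2 * ν) * t = -2 * ν * t by ring, pow_succ, div_pow]
  have hν0 : ν ≠ 0 := hν.ne'
  field_simp
  ring

theorem balloon_gramian_target_element (ν γ : ℝ) (hν : 0 < ν) (hγ : 0 < γ)
    (d b : ℕ) (hd : 1 ≤ d) (hb : 1 ≤ b)
    (A : Matrix (Fin (d + 1)) (Fin (d + 1)) ℝ)
    (hAdiag : ∀ j, A j j = -ν)
    (hAsub : ∀ j : Fin (d + 1), ∀ k : Fin (d + 1), (j : ℕ) = (k : ℕ) + 1 → (j : ℕ) ≤ d - 1 → A j k = γ)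
    (hAlast : ∀ j : Fin (d + 1), ∀ k : Fin (d + 1), (j : ℕ) = d → (k : ℕ) = d - 1 → A j k = b * γ)
    (hAzero : ∀ j k : Fin (d + 1), j ≠ k → (j : ℕ) ≠ (k : ℕ) + 1 → A j k = 0)
    (W : ℝ → Matrix (Fin (d + 1)) (Fin (d + 1)) ℝ)
    (hW0 : W 0 = 0)
    (hWderiv : ∀ (i j : Fin (d + 1)) (t : ℝ),
      HasDerivAt (fun τ => W τ i j)
        (((A * W t + W t * Aᵀ + Matrix.single 0 0 (1 : ℝ) : Matrix (Fin (d + 1)) (Fin (d + 1)) ℝ)) i j) t) :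
    ∀ t : ℝ, 0 ≤ t →
      W t (Fin.last d) (Fin.last d) =
        (b ^ 2 / (2 * ν)) * (γ / (2 * ν)) ^ (2 * d) * (Nat.choose (2 * d) d : ℝ) *
          (1 - Real.exp (-2 * ν * t) *
            ∑ k ∈ Finset.range (2 * d + 1), (2 * ν * t) ^ k / (Nat.factorial k : ℝ)) :=
  balloon_gramian_target_element_general ν γ hν d b hd A hAdiag hAsub hAlast hAzero W hW0 hWderiv
end

section
/- Let ν, γ > 0 and s > 0, and set ρ = γ/(s+2ν), v₀ = 1/(s(s+2ν)). Define V_{j,k} for j,k ≥ 0 by V_{0,0} = v₀, (s+2ν)V_{j,0} = γ·V_{j−1,0}, (s+2ν)V_{0,k} = γ·V_{0,k−1}, and (s+2ν)V_{j,k} = γ·V_{j−1,k} + γ·V_{j,k−1} for j,k ≥ 1. Then V_{j,k} = v₀·C(j+k, k)·ρ^{j+k} for all j,k ≥ 0. -/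
/-! Dividing by `s + 2ν` turns the recursion into Pascal's rule scaled by `ρ = γ / (s + 2ν)`,
whose solution is `V₀₀ · C(j+k, k) · ρ^(j+k)`. -/

theorem eq_mul_choose_mul_pow_of_pascal {R : Type*} [CommSemiring R] (a : R) (W : ℕ → ℕ → R)
    (hj0 : ∀ j, W (j + 1) 0 = a * W j 0) (h0k : ∀ k, W 0 (k + 1) = a * W 0 k)
    (hjk : ∀ j k, W (j + 1) (k + 1) = a * W j (k + 1) + a * W (j + 1) k) (j k : ℕ) :
    W j k = W 0 0 * (j + k).choose k * a ^ (j + k) := by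
  induction j generalizing k with
  | zero =>
    induction k with
    | zero => simp
    | succ k ihk =>
      rw [h0k, ihk]
      simp only [zero_add, Nat.choose_self, Nat.cast_one, pow_succ]
      ring
  | succ j ihj =>
    induction k with
    | zero =>
      rw [hj0, ihj]
      simp only [add_zero, Nat.choose_zero_right, Nat.cast_one, pow_succ]
      ring
    | succ k ihk =>
      rw [hjk, ihj, ihk, show j + 1 + (k + 1) = j + k + 1 + 1 by omega,
        show j + (k + 1) = j + k + 1 by omega, show j + 1 + k = j + k + 1 by omega,
        Nat.choose_succ_succ' (j + k + 1) k, pow_succ]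
      push_cast
      ring

theorem laplace_domain_closed_form_general (ν γ s : ℝ) (hν : 0 < ν) (hs : 0 < s)
    (V : ℕ → ℕ → ℝ)
    (h00 : V 0 0 = 1 / (s * (s + 2 * ν)))
    (hj0 : ∀ j : ℕ, 1 ≤ j → (s + 2 * ν) * V j 0 = γ * V (j - 1) 0)
    (h0k : ∀ k : ℕ, 1 ≤ k → (s + 2 * ν) * V 0 k = γ * V 0 (k - 1))
    (hjk : ∀ j k : ℕ, 1 ≤ j → 1 ≤ k →
      (s + 2 * ν) * V j k = γ * V (j - 1) k + γ * V j (k - 1)) :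
    ∀ j k : ℕ, V j k = (1 / (s * (s + 2 * ν))) * (Nat.choose (j + k) k : ℝ) *
      (γ / (s + 2 * ν)) ^ (j + k) := by
  have hd : s + 2 * ν ≠ 0 := by positivity
  rw [← h00]
  refine eq_mul_choose_mul_pow_of_pascal _ V (fun j => ?_) (fun k => ?_) (fun j k => ?_)
  · have h := hj0 (j + 1) j.succ_pos
    rw [Nat.add_sub_cancel] at h
    field_simp
    linarith
  · have h := h0k (k + 1) k.succ_pos
    rw [Nat.add_sub_cancel] at h
    field_simp
    linarith
  · have h := hjk (j + 1) (k + 1) j.succ_pos k.succ_pos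
    simp only [Nat.add_sub_cancel] at h
    field_simp
    linarith

theorem laplace_domain_closed_form (ν γ s : ℝ) (hν : 0 < ν) (hγ : 0 < γ) (hs : 0 < s)
    (V : ℕ → ℕ → ℝ)
    (h00 : V 0 0 = 1 / (s * (s + 2 * ν)))
    (hj0 : ∀ j : ℕ, 1 ≤ j → (s + 2 * ν) * V j 0 = γ * V (j - 1) 0)
    (h0k : ∀ k : ℕ, 1 ≤ k → (s + 2 * ν) * V 0 k = γ * V 0 (k - 1))
    (hjk : ∀ j k : ℕ, 1 ≤ j → 1 ≤ k →
      (s + 2 * ν) * V j k = γ * V (j - 1) k + γ * V j (k - 1)) :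
    ∀ j k : ℕ, V j k = (1 / (s * (s + 2 * ν))) * (Nat.choose (j + k) k : ℝ) *
      (γ / (s + 2 * ν)) ^ (j + k) :=
  laplace_domain_closed_form_general ν γ s hν hs V h00 hj0 h0k hjk
end
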